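/- Define φ_k(x) = (1−x²)²(1−x) R_k^{(3,2)}(x) for k ≥ 0, where R_k^{(3,2)} is the normalized Jacobi polynomial. Then the fifth derivative satisfies D⁵φ_k(x) = −3(k+1)(k+2)(k+4)(k+5) R_k^{(2,3)}(x). -/

import Mathlib

/-- Classical Jacobi polynomial `P_n^{(a,b)}(x)` (real parameters), via the
hypergeometric sum representation. -/
noncomputable def jacobiP (n : ℕ) (a b x : ℝ) : ℝ :=
  (Real.Gamma (a + n + 1) / (n.factorial * Real.Gamma (a + b + n + 1))) *
    ∑ m ∈ Finset.range (n + 1),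
      (n.choose m : ℝ) * (Real.Gamma (a + b + n + m + 1) / Real.Gamma (a + m + 1)) *
        ((x - 1) / 2) ^ m

/-- Normalized Jacobi polynomial `R_n^{(a,b)}(x) = P_n^{(a,b)}(x)/P_n^{(a,b)}(1)`. -/
noncomputable def jacobiR (n : ℕ) (a b x : ℝ) : ℝ := jacobiP n a b x / jacobiP n a b 1


/-!
In the variable `t = (x - 1) / 2`, for natural parameters `R_k^{(a,b)}` is the polynomial
`∑ₘ c_m tᵐ` with explicit hypergeometric coefficients, the weight `(1 - x²)²(1 - x)` is
`-32 t³ (1 + t)²`, and `D = ½ d/dt`. Hence `D⁵φ_k` is computed coefficientwise, and the theorem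
reduces to the identity
`(m+1)⋯(m+5) (c_m + 2 c_{m+1} + c_{m+2}) = 3 (k+1)(k+2)(k+4)(k+5) d_m`
between the coefficients `c` of `R_k^{(3,2)}` and `d` of `R_k^{(2,3)}`, which follows from the
ratios `c_{m+1} / c_m` and `c_m / d_m`.
-/

open Finset Polynomial
open scoped Nat

noncomputable def jacobiCoeff (a b k m : ℕ) : ℝ :=
  k.choose m * a ! * (a + b + k + m)! / ((a + b + k)! * (a + m)!)

/-- A polynomial in `t = (x - 1) / 2`, see `jacobiR_natCast_eq_eval`. -/
noncomputable def jacobiRPoly (a b k : ℕ) : ℝ[X] :=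
  ∑ m ∈ range (k + 1), C (jacobiCoeff a b k m) * X ^ m

section NaturalParameters

variable (a b k m : ℕ)

lemma jacobiP_natCast (x : ℝ) :
    jacobiP k a b x = (a + k)! / (k ! * (a + b + k)!) *
      ∑ m ∈ range (k + 1), k.choose m * ((a + b + k + m)! / (a + m)! : ℝ) * ((x - 1) / 2) ^ m := by
  simp only [jacobiP, ← Nat.cast_add, Real.Gamma_nat_eq_factorial]

lemma jacobiP_natCast_one :
    jacobiP k a b 1 = (a + k)! / (k ! * (a + b + k)!) * ((a + b + k)! / a ! : ℝ) := by
  rw [jacobiP_natCast, sum_eq_single 0] <;> simp +contextual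

lemma jacobiR_natCast_eq_eval (x : ℝ) :
    jacobiR k a b x = (jacobiRPoly a b k).eval ((x - 1) / 2) := by
  rw [jacobiR, jacobiP_natCast, jacobiP_natCast_one, mul_div_mul_left _ _ (by positivity),
    jacobiRPoly, eval_finsetSum, sum_div]
  refine sum_congr rfl fun m _ => ?_
  simp only [eval_mul, eval_C, eval_pow, eval_X, jacobiCoeff]
  field_simp

lemma jacobiCoeff_eq_zero_of_lt {a b k m : ℕ} (h : k < m) : jacobiCoeff a b k m = 0 := by
  simp [jacobiCoeff, Nat.choose_eq_zero_of_lt h]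

lemma coeff_jacobiRPoly : (jacobiRPoly a b k).coeff m = jacobiCoeff a b k m := by
  simp only [jacobiRPoly, finsetSum_coeff, coeff_C_mul_X_pow, sum_ite_eq, mem_range]
  split_ifs with h
  · rfl
  · exact (jacobiCoeff_eq_zero_of_lt (by omega)).symm

lemma jacobiCoeff_succ_mul :
    jacobiCoeff a b k (m + 1) * ((m + 1) * (a + m + 1)) =
      jacobiCoeff a b k m * ((k - m) * (a + b + k + m + 1)) := by
  have hchoose : ((k.choose (m + 1) : ℕ) : ℝ) * (m + 1) = k.choose m * (k - m) := by
    rcases le_or_gt m k with hmk | hkm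
    · have h := congrArg (Nat.cast (R := ℝ)) (Nat.choose_succ_right_eq k m)
      push_cast [Nat.cast_sub hmk] at h
      exact h
    · simp [Nat.choose_eq_zero_of_lt hkm, Nat.choose_eq_zero_of_lt (hkm.trans m.lt_succ_self)]
  simp only [jacobiCoeff, ← add_assoc, Nat.factorial_succ]
  push_cast
  field_simp
  exact hchoose

lemma jacobiCoeff_succ_left_mul :
    jacobiCoeff (a + 1) b k m * (a + m + 1) = (a + 1) * jacobiCoeff a (b + 1) k m := by
  simp only [jacobiCoeff, show a + 1 + b = a + (b + 1) by ring, show a + 1 + m = a + m + 1 by ring,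
    Nat.factorial_succ]
  push_cast
  field_simp

end NaturalParameters

lemma iteratedDeriv_eval_mul_add {𝕜 : Type*} [NontriviallyNormedField 𝕜] (n : ℕ) (p : 𝕜[X])
    (c d x : 𝕜) :
    iteratedDeriv n (fun y => p.eval (c * y + d)) x =
      c ^ n * (derivative^[n] p).eval (c * x + d) := by
  induction n generalizing p with
  | zero => simp
  | succ n ih =>
    have hderiv : deriv (fun y => p.eval (c * y + d)) =
        fun y => (C c * derivative p).eval (c * y + d) := by
      funext y
      have h := (p.hasDerivAt (c * y + d)).comp y (((hasDerivAt_id y).const_mul c).add_const d)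
      simpa [Function.comp_def, mul_comm] using h.deriv
    rw [iteratedDeriv_succ', hderiv, ih, Function.iterate_succ_apply, iterate_derivative_C_mul,
      eval_mul, eval_C, pow_succ]
    ring

lemma jacobiCoeff_three_two_convolution (k m : ℕ) :
    ((m + 1) * (m + 2) * (m + 3) * (m + 4) * (m + 5) : ℝ) *
        (jacobiCoeff 3 2 k m + 2 * jacobiCoeff 3 2 k (m + 1) + jacobiCoeff 3 2 k (m + 2)) =
      3 * (k + 1) * (k + 2) * (k + 4) * (k + 5) * jacobiCoeff 2 3 k m := by
  have r1 := jacobiCoeff_succ_mul 3 2 k m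
  have r2 := jacobiCoeff_succ_mul 3 2 k (m + 1)
  have rd : jacobiCoeff 3 2 k m * (m + 3) = 3 * jacobiCoeff 2 3 k m := by
    have h := jacobiCoeff_succ_left_mul 2 2 k m
    push_cast at h
    linear_combination h
  push_cast at r1 r2
  -- `r2` eliminates `c_{m+2}`, then `r1` eliminates `c_{m+1}`, and `rd` turns `c_m` into `d_m`
  linear_combination (m + 1) * (m + 3) * (m + 4) * r2 +
    (m + 3) * (2 * (m + 2) * (m + 5) + (k - m - 1) * (k + m + 7)) * r1 +
    (k + 1) * (k + 2) * (k + 4) * (k + 5) * rd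

lemma iterate_derivative_five_jacobiRPoly (k : ℕ) :
    derivative^[5] (X ^ 3 * (1 + X) ^ 2 * jacobiRPoly 3 2 k) =
      C (3 * (k + 1) * (k + 2) * (k + 4) * (k + 5) : ℝ) * jacobiRPoly 2 3 k := by
  ext m
  rw [coeff_iterate_derivative, coeff_C_mul,
    show (X ^ 3 * (1 + X) ^ 2 * jacobiRPoly 3 2 k : ℝ[X]) =
      X ^ 3 * jacobiRPoly 3 2 k + 2 * (X ^ 4 * jacobiRPoly 3 2 k) + X ^ 5 * jacobiRPoly 3 2 k by
    ring]
  simp only [coeff_add, coeff_ofNat_mul, coeff_X_pow_mul', le_add_iff_nonneg_left, zero_le,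
    if_true, Nat.reduceSubDiff, add_tsub_cancel_right, coeff_jacobiRPoly, Nat.descFactorial_succ,
    Nat.descFactorial_zero, nsmul_eq_mul]
  push_cast
  linear_combination jacobiCoeff_three_two_convolution k m

theorem fifthDeriv_basis (k : ℕ) (x : ℝ) :
    iteratedDeriv 5 (fun y => (1 - y ^ 2) ^ 2 * (1 - y) * jacobiR k 3 2 y) x =
      -3 * ((k : ℝ) + 1) * ((k : ℝ) + 2) * ((k : ℝ) + 4) * ((k : ℝ) + 5) * jacobiR k 2 3 x := by
  have hR (a b : ℕ) (y : ℝ) : jacobiR k a b y = (jacobiRPoly a b k).eval (2⁻¹ * y + -2⁻¹) := by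
    rw [jacobiR_natCast_eq_eval]
    ring_nf
  have hR32 (y : ℝ) := hR 3 2 y
  have hR23 := hR 2 3 x
  push_cast at hR32 hR23
  have hφ : (fun y => (1 - y ^ 2) ^ 2 * (1 - y) * jacobiR k 3 2 y) = fun y =>
      (C (-32) * (X ^ 3 * (1 + X) ^ 2 * jacobiRPoly 3 2 k)).eval (2⁻¹ * y + -2⁻¹) := by
    funext y
    simp only [hR32, eval_mul, eval_C, eval_pow, eval_add, eval_one, eval_X]
    ring
  rw [hφ, iteratedDeriv_eval_mul_add, iterate_derivative_C_mul, iterate_derivative_five_jacobiRPoly,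
    hR23]
  simp only [eval_mul, eval_C]
  ring
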